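/- Let C₀₀, C₁₁ ∈ ℝⁿˣⁿ be symmetric positive definite and C₀₁ ∈ ℝⁿˣⁿ arbitrary. Let T̃ = C₁₁^{−1/2} C₀₁ C₀₀^{−1/2} have singular value decomposition with top-k factors Ṽ Σ̃ Ũᵀ. Then T_k = C₁₁^{−1/2} Ṽ Σ̃ Ũᵀ C₀₀^{1/2} minimizes the induced operator norm ‖T_n − S‖ (with respect to the C₀₀- and C₁₁-weighted norms) over all matrices S of rank at most k, where T_n = C₁₁^{−1} C₀₁, and the minimum value is σ_{k+1}(T̃). -/
import Mathlib


open Matrix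

/-- The operator norm of the linear map with matrix `M`, from `ℝⁿ` with the
`C₀₀`-weighted inner product to `ℝⁿ` with the `C₁₁`-weighted inner product. -/
noncomputable def weightedOpNorm {n : ℕ} (C₀₀ C₁₁ M : Matrix (Fin n) (Fin n) ℝ) : ℝ :=
  sSup {r : ℝ | ∃ u : Fin n → ℝ, u ⬝ᵥ C₀₀.mulVec u = 1 ∧
    r = Real.sqrt ((M.mulVec u) ⬝ᵥ C₁₁.mulVec (M.mulVec u))}

namespace WEYaux

variable {n : ℕ}

/-- Euclidean version of the constraint set. -/
def eSet (A : Matrix (Fin n) (Fin n) ℝ) : Set ℝ :=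
  {r : ℝ | ∃ w : Fin n → ℝ, w ⬝ᵥ w = 1 ∧ r = Real.sqrt ((A.mulVec w) ⬝ᵥ (A.mulVec w))}

lemma dot_mulVec_mulVec (A : Matrix (Fin n) (Fin n) ℝ) (x y : Fin n → ℝ) :
    (A.mulVec x) ⬝ᵥ (A.mulVec y) = x ⬝ᵥ ((Aᵀ * A).mulVec y) := by
  rw [← mulVec_mulVec, dotProduct_mulVec x Aᵀ, vecMul_transpose]

lemma orth_dot {A : Matrix (Fin n) (Fin n) ℝ} (h : Aᵀ * A = 1) (x y : Fin n → ℝ) :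
    (A.mulVec x) ⬝ᵥ (A.mulVec y) = x ⬝ᵥ y := by
  rw [dot_mulVec_mulVec, h, one_mulVec]

lemma smul_dot (a : ℝ) (v w : Fin n → ℝ) :
    (a • v) ⬝ᵥ (a • w) = a * (a * (v ⬝ᵥ w)) := by
  simp only [smul_dotProduct, dotProduct_smul, smul_eq_mul]

lemma bddAbove_eSet (A : Matrix (Fin n) (Fin n) ℝ) : BddAbove (eSet A) := by
  refine ⟨Real.sqrt (∑ i, ∑ j, A i j ^ 2), ?_⟩
  rintro r ⟨w, hw, rfl⟩
  apply Real.sqrt_le_sqrt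
  have hsum : ∀ i, (A.mulVec w) i = ∑ j, A i j * w j := fun i => rfl
  have hw2 : ∑ j, w j ^ 2 = 1 := by
    simpa [dotProduct, pow_two] using hw
  calc (A.mulVec w) ⬝ᵥ (A.mulVec w) = ∑ i, (∑ j, A i j * w j) ^ 2 := by
        simp [dotProduct, hsum, pow_two]
    _ ≤ ∑ i, (∑ j, A i j ^ 2) * (∑ j, w j ^ 2) :=
        Finset.sum_le_sum fun i _ => Finset.sum_mul_sq_le_sq_mul_sq _ _ _
    _ = ∑ i, ∑ j, A i j ^ 2 := by
        simp [hw2]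

lemma wset_eq (C₀₀ C₁₁ S₀ S₁ M : Matrix (Fin n) (Fin n) ℝ)
    (hS₀t : S₀ᵀ = S₀) (hS₁t : S₁ᵀ = S₁)
    (hS₀sq : S₀ * S₀ = C₀₀) (hS₁sq : S₁ * S₁ = C₁₁)
    (h₀ : S₀⁻¹ * S₀ = 1) (h₀' : S₀ * S₀⁻¹ = 1) :
    {r : ℝ | ∃ u : Fin n → ℝ, u ⬝ᵥ C₀₀.mulVec u = 1 ∧
      r = Real.sqrt ((M.mulVec u) ⬝ᵥ C₁₁.mulVec (M.mulVec u))} =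
    eSet (S₁ * M * S₀⁻¹) := by
  have hC₀ : C₀₀ = S₀ᵀ * S₀ := by rw [hS₀t, hS₀sq]
  have hC₁ : C₁₁ = S₁ᵀ * S₁ := by rw [hS₁t, hS₁sq]
  ext r
  constructor
  · rintro ⟨u, h1, rfl⟩
    refine ⟨S₀.mulVec u, ?_, ?_⟩
    · rw [dot_mulVec_mulVec, hS₀t, hS₀sq]; exact h1
    · have key : (S₁ * M * S₀⁻¹).mulVec (S₀.mulVec u) = S₁.mulVec (M.mulVec u) := by
        rw [mulVec_mulVec, mul_assoc (S₁ * M), h₀, mul_one, ← mulVec_mulVec]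
      rw [key, dot_mulVec_mulVec, ← hC₁]
  · rintro ⟨w, h1, rfl⟩
    refine ⟨S₀⁻¹.mulVec w, ?_, ?_⟩
    · have key : S₀.mulVec (S₀⁻¹.mulVec w) = w := by
        rw [mulVec_mulVec, h₀', one_mulVec]
      rw [hC₀, ← dot_mulVec_mulVec, key]; exact h1
    · have key : (S₁ * M * S₀⁻¹).mulVec w
          = S₁.mulVec (M.mulVec (S₀⁻¹.mulVec w)) := by
        rw [mulVec_mulVec, mulVec_mulVec]
      rw [hC₁, ← dot_mulVec_mulVec, ← key]

end WEYaux

open WEYaux in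
/-- weighted Eckart–Young. Let `C₀₀ = S₀²`, `C₁₁ = S₁²` be symmetric
positive definite, `C₀₁` arbitrary, and let `T̃ = S₁⁻¹ C₀₁ S₀⁻¹ = V diag(σ) Uᵀ` be an SVD
with nonnegative, non-increasing singular values `σ` and orthogonal `U`, `V`. Then
`T_k = S₁⁻¹ V diag(σ restricted to the top k) Uᵀ S₀` minimizes the weighted operator norm
`‖T_n − S‖` over all matrices `S` of rank at most `k`, where `T_n = C₁₁⁻¹ C₀₁`, and the
minimum value is `σ_{k+1}` (0-based: `σ k`). -/
theorem weighted_eckart_young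
    {n : ℕ} (C₀₀ C₁₁ S₀ S₁ C₀₁ U V : Matrix (Fin n) (Fin n) ℝ)
    (hC₀₀ : C₀₀.PosDef) (hC₁₁ : C₁₁.PosDef)
    (hS₀ : S₀.PosDef) (hS₁ : S₁.PosDef)
    (hS₀sq : S₀ * S₀ = C₀₀) (hS₁sq : S₁ * S₁ = C₁₁)
    (σ : Fin n → ℝ)
    (hσ_nonneg : ∀ i, 0 ≤ σ i)
    (hσ_anti : ∀ i j : Fin n, i ≤ j → σ j ≤ σ i)
    (hU : Uᵀ * U = 1) (hV : Vᵀ * V = 1)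
    (hSVD : S₁⁻¹ * C₀₁ * S₀⁻¹ = V * Matrix.diagonal σ * Uᵀ)
    (k : ℕ) (hk : k < n)
    (Tn Tk : Matrix (Fin n) (Fin n) ℝ)
    (hTn : Tn = C₁₁⁻¹ * C₀₁)
    (hTk : Tk = S₁⁻¹ * (V * Matrix.diagonal (fun i : Fin n => if (i : ℕ) < k then σ i else 0) * Uᵀ) * S₀) :
    (∀ S : Matrix (Fin n) (Fin n) ℝ, S.rank ≤ k →
        weightedOpNorm C₀₀ C₁₁ (Tn - Tk) ≤ weightedOpNorm C₀₀ C₁₁ (Tn - S)) ∧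
    weightedOpNorm C₀₀ C₁₁ (Tn - Tk) = σ ⟨k, hk⟩ := by
  -- basic facts
  have hdS₀ : IsUnit S₀.det := isUnit_iff_ne_zero.2 hS₀.det_pos.ne'
  have hdS₁ : IsUnit S₁.det := isUnit_iff_ne_zero.2 hS₁.det_pos.ne'
  have h₀ : S₀⁻¹ * S₀ = 1 := nonsing_inv_mul _ hdS₀
  have h₀' : S₀ * S₀⁻¹ = 1 := mul_nonsing_inv _ hdS₀
  have h₁' : S₁ * S₁⁻¹ = 1 := mul_nonsing_inv _ hdS₁
  have hS₀t : S₀ᵀ = S₀ := by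
    rw [← conjTranspose_eq_transpose_of_trivial]; exact hS₀.1
  have hS₁t : S₁ᵀ = S₁ := by
    rw [← conjTranspose_eq_transpose_of_trivial]; exact hS₁.1
  have hUUt : U * Uᵀ = 1 := mul_eq_one_comm.mp hU
  have hUt : (Uᵀ)ᵀ * Uᵀ = 1 := by rw [transpose_transpose]; exact hUUt
  set j₀ : Fin n := ⟨k, hk⟩ with hj₀
  set σ'' : Fin n → ℝ := fun i => if (i : ℕ) < k then 0 else σ i with hσ''
  -- transformed matrices
  have hTnA : S₁ * Tn * S₀⁻¹ = V * diagonal σ * Uᵀ := by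
    rw [hTn, ← hS₁sq, Matrix.mul_inv_rev, ← hSVD]
    simp only [← mul_assoc]
    rw [h₁', one_mul]
  have hTkA : S₁ * Tk * S₀⁻¹
      = V * diagonal (fun i : Fin n => if (i : ℕ) < k then σ i else 0) * Uᵀ := by
    rw [hTk]
    simp only [← mul_assoc]
    rw [h₁', one_mul, mul_assoc _ S₀ S₀⁻¹, h₀', mul_one]
  have hA₀ : S₁ * (Tn - Tk) * S₀⁻¹ = V * diagonal σ'' * Uᵀ := by
    rw [Matrix.mul_sub, Matrix.sub_mul, hTnA, hTkA, ← Matrix.sub_mul, ← Matrix.mul_sub,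
      Matrix.diagonal_sub]
    have hfun : (fun i : Fin n => σ i - if (i : ℕ) < k then σ i else 0) = σ'' := by
      funext i
      by_cases h : (i : ℕ) < k <;> simp [hσ'', h]
    rw [hfun]
  -- value of σ'' at j₀
  have hσ''j₀ : σ'' j₀ = σ j₀ := by simp [hσ'', hj₀]
  -- upper bound on eSet (V * diagonal σ'' * Uᵀ)
  have hub : ∀ r ∈ eSet (V * diagonal σ'' * Uᵀ), r ≤ σ j₀ := by
    rintro r ⟨w, hw, rfl⟩
    set c : Fin n → ℝ := Uᵀ.mulVec w with hc
    have h1 : (V * diagonal σ'' * Uᵀ).mulVec w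
        = V.mulVec ((diagonal σ'').mulVec c) := by
      rw [mulVec_mulVec, mulVec_mulVec]
    have hcc : c ⬝ᵥ c = 1 := by rw [hc, orth_dot hUt]; exact hw
    rw [h1, orth_dot hV]
    have hbound : ((diagonal σ'').mulVec c) ⬝ᵥ ((diagonal σ'').mulVec c) ≤ (σ j₀) ^ 2 := by
      have expand : ((diagonal σ'').mulVec c) ⬝ᵥ ((diagonal σ'').mulVec c)
          = ∑ i, (σ'' i * c i) * (σ'' i * c i) := by
        simp [dotProduct, mulVec_diagonal]
      rw [expand]
      have step : ∀ i ∈ Finset.univ, (σ'' i * c i) * (σ'' i * c i)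
          ≤ (σ j₀) ^ 2 * (c i * c i) := by
        intro i _
        have h1 : (σ'' i * c i) * (σ'' i * c i) = σ'' i ^ 2 * (c i * c i) := by ring
        rw [h1]
        apply mul_le_mul_of_nonneg_right _ (mul_self_nonneg _)
        by_cases h : (i : ℕ) < k
        · simp [hσ'', h]; positivity
        · have hle : j₀ ≤ i := by
            rw [Fin.le_def]; exact le_of_not_gt h
          have := hσ_anti j₀ i hle
          simp only [hσ'', if_neg h]
          exact pow_le_pow_left₀ (hσ_nonneg i) this 2
      calc ∑ i, (σ'' i * c i) * (σ'' i * c i)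
          ≤ ∑ i, (σ j₀) ^ 2 * (c i * c i) := Finset.sum_le_sum step
        _ = (σ j₀) ^ 2 * (c ⬝ᵥ c) := by rw [← Finset.mul_sum]; rfl
        _ = (σ j₀) ^ 2 := by rw [hcc, mul_one]
    calc Real.sqrt _ ≤ Real.sqrt ((σ j₀) ^ 2) := Real.sqrt_le_sqrt hbound
      _ = σ j₀ := Real.sqrt_sq (hσ_nonneg _)
  -- membership
  have hmem : σ j₀ ∈ eSet (V * diagonal σ'' * Uᵀ) := by
    refine ⟨U.mulVec (Pi.single j₀ (1:ℝ)), ?_, ?_⟩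
    · rw [orth_dot hU]
      simp [dotProduct, Pi.single_apply]
    · have key : (V * diagonal σ'' * Uᵀ).mulVec (U.mulVec (Pi.single j₀ (1:ℝ)))
          = V.mulVec ((diagonal σ'').mulVec (Pi.single j₀ (1:ℝ))) := by
        rw [mulVec_mulVec, mul_assoc (V * diagonal σ''), hU, mul_one, ← mulVec_mulVec]
      rw [key, orth_dot hV]
      have expand : ((diagonal σ'').mulVec (Pi.single j₀ (1:ℝ))) ⬝ᵥ
          ((diagonal σ'').mulVec (Pi.single j₀ (1:ℝ)))
          = ∑ i, (σ'' i * (Pi.single j₀ (1:ℝ) : Fin n → ℝ) i) * (σ'' i * (Pi.single j₀ (1:ℝ) : Fin n → ℝ) i) := by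
        simp [dotProduct, mulVec_diagonal]
      rw [expand]
      have collapse : ∑ i, (σ'' i * (Pi.single j₀ (1:ℝ) : Fin n → ℝ) i) * (σ'' i * (Pi.single j₀ (1:ℝ) : Fin n → ℝ) i)
          = σ'' j₀ * σ'' j₀ := by
        rw [Finset.sum_eq_single j₀]
        · simp
        · intro i _ hne; simp [Pi.single_apply, hne]
        · intro h; exact absurd (Finset.mem_univ _) h
      rw [collapse, hσ''j₀, Real.sqrt_mul_self (hσ_nonneg _)]
  have hval : weightedOpNorm C₀₀ C₁₁ (Tn - Tk) = σ j₀ := by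
    unfold weightedOpNorm
    rw [wset_eq C₀₀ C₁₁ S₀ S₁ (Tn - Tk) hS₀t hS₁t hS₀sq hS₁sq h₀ h₀', hA₀]
    exact le_antisymm (csSup_le ⟨_, hmem⟩ hub) (le_csSup (bddAbove_eSet _) hmem)
  refine ⟨?_, hval⟩
  -- first part: minimality
  intro S hS
  rw [hval]
  unfold weightedOpNorm
  rw [wset_eq C₀₀ C₁₁ S₀ S₁ (Tn - S) hS₀t hS₁t hS₀sq hS₁sq h₀ h₀']
  set B : Matrix (Fin n) (Fin n) ℝ := S₁ * S * S₀⁻¹ with hB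
  have hA' : S₁ * (Tn - S) * S₀⁻¹ = V * diagonal σ * Uᵀ - B := by
    rw [Matrix.mul_sub, Matrix.sub_mul, hTnA]
  -- the selector matrix J
  set J : Matrix (Fin n) (Fin (k+1)) ℝ :=
    Matrix.of (fun j i => if (j : ℕ) = (i : ℕ) then (1:ℝ) else 0) with hJ
  have hrank : (B * U * J).rank ≤ k :=
    calc (B * U * J).rank ≤ (B * U).rank := rank_mul_le_left _ _
      _ ≤ B.rank := rank_mul_le_left _ _
      _ ≤ (S₁ * S).rank := rank_mul_le_left _ _
      _ ≤ S.rank := rank_mul_le_right _ _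
      _ ≤ k := hS
  -- find nonzero kernel element
  set φ : (Fin (k+1) → ℝ) →ₗ[ℝ] (Fin n → ℝ) := (B * U * J).mulVecLin with hφ
  have hkerne : LinearMap.ker φ ≠ ⊥ := by
    intro hbot
    have h1 := LinearMap.finrank_range_add_finrank_ker φ
    rw [hbot, finrank_bot, add_zero, Module.finrank_fin_fun] at h1
    have h2 : Module.finrank ℝ (LinearMap.range φ) = (B * U * J).rank := rfl
    omega
  obtain ⟨c, hcker, hcne⟩ := Submodule.exists_mem_ne_zero_of_ne_bot hkerne
  have hφc : (B * U * J).mulVec c = 0 := hcker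
  set d : Fin n → ℝ := J.mulVec c with hd
  have hdval : ∀ j : Fin n, d j = if h : (j : ℕ) < k + 1 then c ⟨(j : ℕ), h⟩ else 0 := by
    intro j
    have base : d j = ∑ i : Fin (k+1), (if (j : ℕ) = (i : ℕ) then (1:ℝ) else 0) * c i := rfl
    by_cases h : (j : ℕ) < k + 1
    · rw [dif_pos h, base, Finset.sum_eq_single ⟨(j : ℕ), h⟩]
      · simp
      · intro i _ hne
        rw [if_neg, zero_mul]
        intro hji; exact hne (Fin.ext hji.symm)
      · intro habs; exact absurd (Finset.mem_univ _) habs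
    · rw [dif_neg h, base]
      apply Finset.sum_eq_zero
      intro i _
      rw [if_neg, zero_mul]
      intro hji; exact h (hji ▸ i.isLt)
  have hdsupp : ∀ j : Fin n, k < (j : ℕ) → d j = 0 := by
    intro j hj
    rw [hdval j, dif_neg (by omega)]
  have hdne : d ≠ 0 := by
    obtain ⟨i, hi⟩ := Function.ne_iff.mp hcne
    intro hd0
    apply hi
    have hin : (i : ℕ) < n := lt_of_lt_of_le i.isLt hk
    have := congrFun hd0 ⟨(i : ℕ), hin⟩
    rw [hdval] at this
    simp only [dif_pos i.isLt] at this
    simpa using this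
  set s : ℝ := d ⬝ᵥ d with hsdef
  have hs_nonneg : 0 ≤ s := Finset.sum_nonneg fun i _ => mul_self_nonneg _
  have hs_pos : 0 < s := by
    rcases hs_nonneg.lt_or_eq with h | h
    · exact h
    · exact absurd (dotProduct_self_eq_zero.mp h.symm) hdne
  set a : ℝ := (Real.sqrt s)⁻¹ with ha
  have ha_nonneg : 0 ≤ a := inv_nonneg.2 (Real.sqrt_nonneg _)
  have haa : a * a * s = 1 := by
    rw [ha, ← mul_inv]
    rw [Real.mul_self_sqrt hs_nonneg]
    exact inv_mul_cancel₀ hs_pos.ne'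
  -- the witness vector
  set w : Fin n → ℝ := a • (U.mulVec d) with hw
  have hww : w ⬝ᵥ w = 1 := by
    rw [hw, smul_dot, orth_dot hU, ← hsdef]
    linear_combination haa
  -- compute (A' w) ⬝ᵥ (A' w)
  have hBw : B.mulVec (U.mulVec d) = 0 := by
    rw [hd, mulVec_mulVec, mulVec_mulVec]
    exact hφc
  have hAw : (V * diagonal σ * Uᵀ - B).mulVec w
      = a • (V.mulVec ((diagonal σ).mulVec d)) := by
    rw [hw, mulVec_smul]
    congr 1
    rw [sub_mulVec, hBw, sub_zero, mulVec_mulVec, mul_assoc (V * diagonal σ), hU,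
      mul_one, ← mulVec_mulVec]
  have hlow : (σ j₀) ^ 2 ≤ ((V * diagonal σ * Uᵀ - B).mulVec w) ⬝ᵥ
      ((V * diagonal σ * Uᵀ - B).mulVec w) := by
    rw [hAw, smul_dot, orth_dot hV]
    have expand : ((diagonal σ).mulVec d) ⬝ᵥ ((diagonal σ).mulVec d)
        = ∑ i, (σ i * d i) * (σ i * d i) := by
      simp [dotProduct, mulVec_diagonal]
    have step : ∀ i ∈ Finset.univ, (σ j₀) ^ 2 * (d i * d i)
        ≤ (σ i * d i) * (σ i * d i) := by
      intro i _
      by_cases h : (i : ℕ) ≤ k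
      · have hle : i ≤ j₀ := by rw [Fin.le_def]; exact h
        have h1 : σ j₀ ≤ σ i := hσ_anti i j₀ hle
        have h2 : (σ j₀) ^ 2 ≤ (σ i) ^ 2 := pow_le_pow_left₀ (hσ_nonneg _) h1 2
        calc (σ j₀) ^ 2 * (d i * d i) ≤ (σ i) ^ 2 * (d i * d i) :=
              mul_le_mul_of_nonneg_right h2 (mul_self_nonneg _)
          _ = (σ i * d i) * (σ i * d i) := by ring
      · rw [hdsupp i (lt_of_not_ge h)]; ring_nf; simp
    have hsum : (σ j₀) ^ 2 * s ≤ ((diagonal σ).mulVec d) ⬝ᵥ ((diagonal σ).mulVec d) := by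
      rw [expand, hsdef]
      calc (σ j₀) ^ 2 * (d ⬝ᵥ d) = ∑ i, (σ j₀) ^ 2 * (d i * d i) := by
            rw [← Finset.mul_sum]; rfl
        _ ≤ ∑ i, (σ i * d i) * (σ i * d i) := Finset.sum_le_sum step
    have hone : a * (a * ((σ j₀) ^ 2 * s)) = (σ j₀) ^ 2 := by
      have h9 : a * (a * ((σ j₀) ^ 2 * s)) = (a * a * s) * (σ j₀) ^ 2 := by ring
      rw [h9, haa, one_mul]
    calc (σ j₀) ^ 2 = a * (a * ((σ j₀) ^ 2 * s)) := hone.symm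
      _ ≤ a * (a * (((diagonal σ).mulVec d) ⬝ᵥ ((diagonal σ).mulVec d))) := by
          apply mul_le_mul_of_nonneg_left _ ha_nonneg
          exact mul_le_mul_of_nonneg_left hsum ha_nonneg
  -- conclude
  have hrmem : Real.sqrt (((V * diagonal σ * Uᵀ - B).mulVec w) ⬝ᵥ
      ((V * diagonal σ * Uᵀ - B).mulVec w)) ∈ eSet (S₁ * (Tn - S) * S₀⁻¹) := by
    rw [hA']
    exact ⟨w, hww, rfl⟩
  have hge : σ j₀ ≤ Real.sqrt (((V * diagonal σ * Uᵀ - B).mulVec w) ⬝ᵥ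
      ((V * diagonal σ * Uᵀ - B).mulVec w)) := by
    calc σ j₀ = Real.sqrt ((σ j₀) ^ 2) := (Real.sqrt_sq (hσ_nonneg _)).symm
      _ ≤ _ := Real.sqrt_le_sqrt hlow
  exact hge.trans (le_csSup (bddAbove_eSet _) hrmem)
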